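/- arXiv:1602.06028 — 6 statements merged into one kernel-verified Lean document; each statement's English description precedes it below -/
import Mathlib

section
/- Let p ≥ 2 be an integer. For any b > 0 and ε > 0 there exists a real number e such that b^{−p} | |e|^p − |e + d|^p | > ε for some d with |d| ≤ Δ (in fact for d = Δ), where Δ > 0 is fixed. Consequently, no choice of scale b makes the bound b^{−p} | |e|^p − |e+d|^p | ≤ ε hold uniformly over all noise values e ∈ ℝ. -/
open Filter

lemma mul_le_add_pow_sub_pow {p : ℕ} (hp : 2 ≤ p) {x y : ℝ} (hx : 1 ≤ x) (hy : 0 ≤ y) :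
    y * x ≤ (x + y) ^ p - x ^ p := by
  obtain ⟨n, rfl⟩ : ∃ n, p = n + 2 := ⟨p - 2, by omega⟩
  have hx₀ : 0 ≤ x := zero_le_one.trans hx
  have hpow : x ^ (n + 1) ≤ (x + y) ^ (n + 1) := pow_le_pow_left₀ hx₀ (by linarith) _
  have hx_le : x ≤ x ^ (n + 1) := le_self_pow₀ hx (by omega)
  calc y * x ≤ y * x ^ (n + 1) := mul_le_mul_of_nonneg_left hx_le hy
    _ = (x + y) * x ^ (n + 1) - x ^ (n + 2) := by ring
    _ ≤ (x + y) * (x + y) ^ (n + 1) - x ^ (n + 2) := by gcongr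
    _ = (x + y) ^ (n + 2) - x ^ (n + 2) := by ring

lemma tendsto_abs_sub_abs_pow_add_atTop {p : ℕ} (hp : 2 ≤ p) {Δ : ℝ} (hΔ : 0 < Δ) :
    Tendsto (fun e : ℝ ↦ |(|e| ^ p - |e + Δ| ^ p)|) atTop atTop := by
  refine tendsto_atTop_mono' _ ?_ (tendsto_id.const_mul_atTop hΔ)
  filter_upwards [eventually_ge_atTop 1] with e he
  have he₀ : 0 ≤ e := zero_le_one.trans he
  rw [id, abs_of_nonneg he₀, abs_of_nonneg (by linarith : 0 ≤ e + Δ), abs_sub_comm]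
  exact (mul_le_add_pow_sub_pow hp he hΔ.le).trans (le_abs_self _)

/-- for `p ≥ 2` the quantity `b^{-p} | |e|^p - |e+d|^p |` is unbounded in `e`
(already with `d = Δ`), so no scale `b` makes it uniformly `≤ ε` over all noise values. -/
theorem stmt4 (p : ℕ) (hp : 2 ≤ p) (Δ : ℝ) (hΔ : 0 < Δ) :
    (∀ b > (0 : ℝ), ∀ ε > (0 : ℝ), ∃ e : ℝ,
      (b ^ p)⁻¹ * |(|e| ^ p - |e + Δ| ^ p)| > ε) ∧
    (∀ ε > (0 : ℝ), ¬ ∃ b > (0 : ℝ), ∀ e : ℝ, ∀ d : ℝ, |d| ≤ Δ →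
      (b ^ p)⁻¹ * |(|e| ^ p - |e + d| ^ p)| ≤ ε) := by
  have unbounded : ∀ b > (0 : ℝ), ∀ ε : ℝ, ∃ e : ℝ,
      (b ^ p)⁻¹ * |(|e| ^ p - |e + Δ| ^ p)| > ε := fun b hb ε ↦
    (((tendsto_abs_sub_abs_pow_add_atTop hp hΔ).const_mul_atTop
      (inv_pos.2 (pow_pos hb p))).eventually_gt_atTop ε).exists
  refine ⟨fun b hb ε _ ↦ unbounded b hb ε, ?_⟩
  rintro ε - ⟨b, hb, hbound⟩
  obtain ⟨e, he⟩ := unbounded b hb ε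
  exact he.not_ge (hbound e Δ (abs_of_pos hΔ).le)
end

section
/- Let f_μ(y) ∝ exp(−(|y − μ|/b)^p) on ℝ^r (product over coordinates) with p an integer ≥ 1. For two centers s, s' ∈ ℝ^r and any output s* ∈ ∏_k [c_{k0}, c_{k1}], the log-ratio of the product densities satisfies |log(∏_k f_{s_k}(s*_k) / ∏_k f_{s'_k}(s*_k))| ≤ b^{−p} (∑_{k=1}^r ∑_{j=1}^{p−1} (p choose j) |c_{k1} − c_{k0}|^{p−j} Δ_{1,k}^j + Δ_p^p), where Δ_{1,k} ≥ |s_k − s'_k| for each k and Δ_p^p ≥ ∑_k |s_k − s'_k|^p. -/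
/-!
Each factor contributes `(|s*ₖ - s'ₖ|ᵖ - |s*ₖ - sₖ|ᵖ) / bᵖ` to the log-ratio. The two distances
`|s*ₖ - sₖ|` and `|s*ₖ - s'ₖ|` lie in `[0, |cₖ₁ - cₖ₀|]` and differ by at most `|sₖ - s'ₖ|`, so
expanding `(a + d)ᵖ` binomially bounds the difference of their `p`-th powers by the mixed
binomial terms, with `a ≤ |cₖ₁ - cₖ₀|` and `d ≤ Δ₁,ₖ`, plus the pure term `|sₖ - s'ₖ|ᵖ`.
-/

open Finset

theorem add_pow_eq_pow_add_sum_Icc_add_pow {R : Type*} [CommSemiring R] {p : ℕ} (hp : 1 ≤ p)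
    (a d : R) :
    (a + d) ^ p = a ^ p + ∑ j ∈ Icc 1 (p - 1), (p.choose j : R) * a ^ (p - j) * d ^ j + d ^ p := by
  obtain ⟨n, rfl⟩ := Nat.exists_eq_add_of_le' hp
  rw [add_comm a, add_pow, sum_range_succ, range_eq_Ico,
    sum_eq_sum_Ico_succ_bot (by omega : 0 < n + 1), zero_add, Ico_add_one_right_eq_Icc,
    Nat.add_sub_cancel]
  simp only [pow_zero, Nat.sub_zero, Nat.choose_zero_right, Nat.sub_self, Nat.choose_self,
    Nat.cast_one, one_mul, mul_one]
  have hterm : ∀ j, d ^ j * a ^ (n + 1 - j) * ((n + 1).choose j : R) =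
      ((n + 1).choose j : R) * a ^ (n + 1 - j) * d ^ j := fun j ↦ by ring
  simp_rw [hterm]

theorem add_pow_le_pow_add_sum_Icc_add_pow {R : Type*} [CommSemiring R] [PartialOrder R]
    [IsOrderedRing R] (p : ℕ) {a d M D : R} (ha : 0 ≤ a) (haM : a ≤ M) (hd : 0 ≤ d)
    (hdD : d ≤ D) :
    (a + d) ^ p ≤
      a ^ p + ∑ j ∈ Icc 1 (p - 1), (p.choose j : R) * M ^ (p - j) * D ^ j + d ^ p := by
  rcases Nat.eq_zero_or_pos p with rfl | hp
  · simpa using le_add_of_nonneg_right (zero_le_one' R)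
  have hM : 0 ≤ M := ha.trans haM
  rw [add_pow_eq_pow_add_sum_Icc_add_pow hp]
  gcongr

theorem abs_pow_sub_pow_le_sum_Icc_add_pow {R : Type*} [CommRing R] [LinearOrder R]
    [IsStrictOrderedRing R] (p : ℕ) {a a' d M D : R} (ha : 0 ≤ a) (ha' : 0 ≤ a')
    (haM : a ≤ M) (ha'M : a' ≤ M) (hd : |a - a'| ≤ d) (hdD : d ≤ D) :
    |a ^ p - a' ^ p| ≤ ∑ j ∈ Icc 1 (p - 1), (p.choose j : R) * M ^ (p - j) * D ^ j + d ^ p := by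
  wlog hle : a' ≤ a generalizing a a'
  · rw [abs_sub_comm]
    exact this ha' ha ha'M haM (abs_sub_comm a a' ▸ hd) (le_of_not_ge hle)
  have hpow : a ^ p ≤ (a' + d) ^ p :=
    pow_le_pow_left₀ ha (by linarith [le_abs_self (a - a')]) p
  rw [abs_of_nonneg (sub_nonneg.mpr (pow_le_pow_left₀ ha' hle p))]
  linarith [add_pow_le_pow_add_sum_Icc_add_pow p ha' ha'M ((abs_nonneg _).trans hd) hdD]

theorem abs_abs_sub_pow_sub_abs_sub_pow_le (p : ℕ) {x s s' c₀ c₁ Δ : ℝ}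
    (hx : x ∈ Set.Icc c₀ c₁) (hs : s ∈ Set.Icc c₀ c₁) (hs' : s' ∈ Set.Icc c₀ c₁)
    (hΔ : |s - s'| ≤ Δ) :
    |(|x - s'| ^ p - |x - s| ^ p)| ≤
      ∑ j ∈ Icc 1 (p - 1), (p.choose j : ℝ) * |c₁ - c₀| ^ (p - j) * Δ ^ j + |s - s'| ^ p := by
  obtain ⟨hx₀, hx₁⟩ := hx
  obtain ⟨hs₀, hs₁⟩ := hs
  obtain ⟨hs'₀, hs'₁⟩ := hs'
  have hwidth : |c₁ - c₀| = c₁ - c₀ := abs_of_nonneg (by linarith)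
  refine abs_pow_sub_pow_le_sum_Icc_add_pow p (abs_nonneg _) (abs_nonneg _) ?_ ?_ ?_ hΔ
  · rw [hwidth, abs_sub_le_iff]; constructor <;> linarith
  · rw [hwidth, abs_sub_le_iff]; constructor <;> linarith
  · simpa using abs_abs_sub_abs_le_abs_sub (x - s') (x - s)

theorem log_prod_exp_div_prod_exp {ι : Type*} (t : Finset ι) (f g : ι → ℝ) :
    Real.log ((∏ k ∈ t, Real.exp (f k)) / ∏ k ∈ t, Real.exp (g k)) = ∑ k ∈ t, (f k - g k) := by
  rw [← Real.exp_sum, ← Real.exp_sum, ← Real.exp_sub, Real.log_exp, sum_sub_distrib]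

theorem stmt6_general {r : ℕ} (p : ℕ) (b : ℝ) (hb : 0 < b)
    (s s' sstar c0 c1 : Fin r → ℝ) (Δ1 : Fin r → ℝ) (Δpp : ℝ)
    (hs : ∀ k, s k ∈ Set.Icc (c0 k) (c1 k))
    (hs' : ∀ k, s' k ∈ Set.Icc (c0 k) (c1 k))
    (hstar : ∀ k, sstar k ∈ Set.Icc (c0 k) (c1 k))
    (hΔ1 : ∀ k, |s k - s' k| ≤ Δ1 k)
    (hΔp : ∑ k : Fin r, |s k - s' k| ^ p ≤ Δpp) :
    |Real.log ((∏ k : Fin r, Real.exp (-(|sstar k - s k| / b) ^ p)) /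
        (∏ k : Fin r, Real.exp (-(|sstar k - s' k| / b) ^ p)))| ≤
      (b ^ p)⁻¹ *
        ((∑ k : Fin r, ∑ j ∈ Finset.Icc 1 (p - 1),
            (p.choose j : ℝ) * |c1 k - c0 k| ^ (p - j) * Δ1 k ^ j) + Δpp) := by
  have hexponent : ∀ k, -(|sstar k - s k| / b) ^ p - -(|sstar k - s' k| / b) ^ p =
      (b ^ p)⁻¹ * (|sstar k - s' k| ^ p - |sstar k - s k| ^ p) := fun k ↦ by
    rw [div_pow, div_pow]; ring
  rw [log_prod_exp_div_prod_exp, sum_congr rfl fun k _ ↦ hexponent k, ← mul_sum, abs_mul,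
    abs_of_pos (by positivity)]
  gcongr
  calc |∑ k, (|sstar k - s' k| ^ p - |sstar k - s k| ^ p)|
      ≤ ∑ k, |(|sstar k - s' k| ^ p - |sstar k - s k| ^ p)| := abs_sum_le_sum_abs _ _
    _ ≤ ∑ k, (∑ j ∈ Icc 1 (p - 1), (p.choose j : ℝ) * |c1 k - c0 k| ^ (p - j) * Δ1 k ^ j
          + |s k - s' k| ^ p) := by
        gcongr with k
        exact abs_abs_sub_pow_sub_abs_sub_pow_le p (hstar k) (hs k) (hs' k) (hΔ1 k)
    _ ≤ _ := by
        rw [sum_add_distrib]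
        gcongr

/-- bound on the log-ratio of unnormalized generalized-Gaussian product
densities restricted to a bounded output domain. -/
theorem stmt6 {r : ℕ} (p : ℕ) (hp : 1 ≤ p) (b : ℝ) (hb : 0 < b)
    (s s' sstar c0 c1 : Fin r → ℝ) (Δ1 : Fin r → ℝ) (Δpp : ℝ)
    (hs : ∀ k, s k ∈ Set.Icc (c0 k) (c1 k))
    (hs' : ∀ k, s' k ∈ Set.Icc (c0 k) (c1 k))
    (hstar : ∀ k, sstar k ∈ Set.Icc (c0 k) (c1 k))
    (hΔ1 : ∀ k, |s k - s' k| ≤ Δ1 k)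
    (hΔp : ∑ k : Fin r, |s k - s' k| ^ p ≤ Δpp) :
    |Real.log ((∏ k : Fin r, Real.exp (-(|sstar k - s k| / b) ^ p)) /
        (∏ k : Fin r, Real.exp (-(|sstar k - s' k| / b) ^ p)))| ≤
      (b ^ p)⁻¹ *
        ((∑ k : Fin r, ∑ j ∈ Finset.Icc 1 (p - 1),
            (p.choose j : ℝ) * |c1 k - c0 k| ^ (p - j) * Δ1 k ^ j) + Δpp) :=
  stmt6_general p b hb s s' sstar c0 c1 Δ1 Δpp hs hs' hstar hΔ1 hΔp
end

section
/- With the notation of the truncated generalized Gaussian mechanism: if b^p ≥ 2ε^{−1}(∑_{k=1}^r ∑_{j=1}^{p−1} (p choose j)|c_{k1} − c_{k0}|^{p−j} Δ_{1,k}^j + Δ_p^p), then the mechanism that samples each coordinate s*_k independently from the GG(s_k, b, p) distribution truncated to [c_{k0}, c_{k1}] satisfies ε-differential privacy: for all neighboring datasets and all measurable Q ⊆ ∏_k [c_{k0}, c_{k1}], |log(Pr(s* ∈ Q | x)/Pr(s* ∈ Q | x'))| ≤ ε. -/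
/-!
The output density is a product of one-dimensional truncated generalized Gaussians, so it is
enough to compare one factor at neighbouring centres `m`, `m'` of the interval `[a, c]`.
Expanding `|y - m'| ^ p ≤ (|y - m| + |m - m'|) ^ p` binomially and using `|y - m| ≤ |c - a|`
bounds the ratio of the unnormalized densities by `exp E`, where
`E = (∑_{j=1}^{p-1} (p choose j) |c - a| ^ (p - j) Δ ^ j + |m - m'| ^ p) / b ^ p`; integrating the
same bound in the other direction shows that the normalizing constants differ by at most the
factor `exp E` as well. Over all coordinates the scale condition gives `2 ∑ E ≤ ε`, so the two
output densities are within a factor `exp ε` of each other on the whole box, and so are their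
integrals over `Q`.
-/

open MeasureTheory Real

noncomputable def binomialCrossTerms (p : ℕ) (A D : ℝ) : ℝ :=
  ∑ j ∈ Finset.Icc 1 (p - 1), (p.choose j : ℝ) * A ^ (p - j) * D ^ j

theorem add_pow_le_pow_add_binomialCrossTerms_add_pow {u v A D : ℝ} {p : ℕ} (hp : 1 ≤ p)
    (hu : 0 ≤ u) (hv : 0 ≤ v) (huA : u ≤ A) (hvD : v ≤ D) :
    (u + v) ^ p ≤ u ^ p + binomialCrossTerms p A D + v ^ p := by
  have hrange : Finset.range (p + 1) = insert p (insert 0 (Finset.Icc 1 (p - 1))) := by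
    ext j
    simp only [Finset.mem_range, Finset.mem_insert, Finset.mem_Icc]
    omega
  rw [add_comm u v, add_pow, hrange, Finset.sum_insert (by simp; omega),
    Finset.sum_insert (by simp)]
  simp only [pow_zero, Nat.choose_zero_right, Nat.choose_self, Nat.sub_zero, Nat.sub_self,
    Nat.cast_one, one_mul, mul_one]
  have hmiddle : ∑ j ∈ Finset.Icc 1 (p - 1), v ^ j * u ^ (p - j) * (p.choose j : ℝ) ≤
      binomialCrossTerms p A D :=
    Finset.sum_le_sum fun j _ =>
      calc v ^ j * u ^ (p - j) * (p.choose j : ℝ)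
          ≤ D ^ j * A ^ (p - j) * (p.choose j : ℝ) := by
            gcongr
            exact pow_nonneg (hv.trans hvD) j
        _ = (p.choose j : ℝ) * A ^ (p - j) * D ^ j := by ring
  linarith

theorem abs_sub_pow_le {y m m' a c Δ : ℝ} {p : ℕ} (hp : 1 ≤ p) (hy : y ∈ Set.Icc a c)
    (hm : m ∈ Set.Icc a c) (hd : |m - m'| ≤ Δ) :
    |y - m'| ^ p ≤ |y - m| ^ p + binomialCrossTerms p |c - a| Δ + |m - m'| ^ p := by
  have hym : |y - m| ≤ |c - a| := Set.abs_sub_le_of_uIcc_subset_uIcc <|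
    Set.uIcc_subset_uIcc (Set.Icc_subset_uIcc hm) (Set.Icc_subset_uIcc hy)
  calc |y - m'| ^ p ≤ (|y - m| + |m - m'|) ^ p :=
        pow_le_pow_left₀ (abs_nonneg _) (abs_sub_le _ _ _) p
    _ ≤ _ := add_pow_le_pow_add_binomialCrossTerms_add_pow hp (abs_nonneg _) (abs_nonneg _) hym hd

theorem exp_neg_div_pow_le {y m m' a c Δ b : ℝ} {p : ℕ} (hp : 1 ≤ p) (hb : 0 < b)
    (hy : y ∈ Set.Icc a c) (hm : m ∈ Set.Icc a c) (hd : |m - m'| ≤ Δ) :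
    exp (-(|y - m| / b) ^ p) ≤
      exp ((binomialCrossTerms p |c - a| Δ + |m - m'| ^ p) / b ^ p) *
        exp (-(|y - m'| / b) ^ p) := by
  rw [← exp_add, exp_le_exp, div_pow, div_pow]
  have key := div_le_div_of_nonneg_right (abs_sub_pow_le hp hy hm hd) (pow_pos hb p).le
  rw [add_assoc, add_div] at key
  linarith

theorem div_setIntegral_le_sq_mul_div_setIntegral {α : Type*} [MeasurableSpace α]
    {μ : Measure α} {S : Set α} {f g : α → ℝ} {C : ℝ} {u : α} (hS : MeasurableSet S)
    (hf : IntegrableOn f S μ) (hg : IntegrableOn g S μ) (hf0 : 0 ≤ f) (hg0 : 0 ≤ g)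
    (hfg : ∀ t ∈ S, f t ≤ C * g t) (hgf : ∀ t ∈ S, g t ≤ C * f t) (hu : u ∈ S) :
    f u / ∫ t in S, f t ∂μ ≤ C ^ 2 * (g u / ∫ t in S, g t ∂μ) := by
  -- Vanishing normalizers (from a degenerate interval, say) need no separate case: `x / 0 = 0`.
  have hZfg : ∫ t in S, f t ∂μ ≤ C * ∫ t in S, g t ∂μ := by
    rw [← integral_const_mul]
    exact setIntegral_mono_on hf (hg.const_mul C) hS hfg
  have hZgf : ∫ t in S, g t ∂μ ≤ C * ∫ t in S, f t ∂μ := by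
    rw [← integral_const_mul]
    exact setIntegral_mono_on hg (hf.const_mul C) hS hgf
  have hZf0 : 0 ≤ ∫ t in S, f t ∂μ := setIntegral_nonneg hS fun t _ => hf0 t
  have hZg0 : 0 ≤ ∫ t in S, g t ∂μ := setIntegral_nonneg hS fun t _ => hg0 t
  rcases hZf0.eq_or_lt with hZf | hZf
  · rw [← hZf, div_zero]
    exact mul_nonneg (sq_nonneg C) (div_nonneg (hg0 u) hZg0)
  have hZg : 0 < ∫ t in S, g t ∂μ :=
    hZg0.lt_of_ne fun h => by rw [← h, mul_zero] at hZfg; linarith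
  rw [← mul_div_assoc, div_le_div_iff₀ hZf hZg]
  calc f u * ∫ t in S, g t ∂μ ≤ (C * g u) * (C * ∫ t in S, f t ∂μ) :=
        mul_le_mul (hfg u hu) hZgf hZg0 ((hf0 u).trans (hfg u hu))
    _ = C ^ 2 * g u * ∫ t in S, f t ∂μ := by ring

noncomputable def truncGG (a c m b : ℝ) (p : ℕ) (t : ℝ) : ℝ :=
  exp (-(|t - m| / b) ^ p) / ∫ s in Set.Icc a c, exp (-(|s - m| / b) ^ p)

theorem truncGG_nonneg (a c m b : ℝ) (p : ℕ) (t : ℝ) : 0 ≤ truncGG a c m b p t :=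
  div_nonneg (exp_pos _).le (setIntegral_nonneg measurableSet_Icc fun _ _ => (exp_pos _).le)

theorem truncGG_le {a c m m' Δ b u : ℝ} {p : ℕ} (hp : 1 ≤ p) (hb : 0 < b)
    (hm : m ∈ Set.Icc a c) (hm' : m' ∈ Set.Icc a c) (hd : |m - m'| ≤ Δ) (hu : u ∈ Set.Icc a c) :
    truncGG a c m b p u ≤
      exp ((binomialCrossTerms p |c - a| Δ + |m - m'| ^ p) / b ^ p) ^ 2 * truncGG a c m' b p u := by
  have hint : ∀ n : ℝ, IntegrableOn (fun t => exp (-(|t - n| / b) ^ p)) (Set.Icc a c) :=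
    fun n => (by fun_prop : Continuous fun t => exp (-(|t - n| / b) ^ p)).integrableOn_Icc
  refine div_setIntegral_le_sq_mul_div_setIntegral measurableSet_Icc (hint m) (hint m')
    (fun t => (exp_pos _).le) (fun t => (exp_pos _).le)
    (fun t ht => exp_neg_div_pow_le hp hb ht hm hd) (fun t ht => ?_) hu
  have h := exp_neg_div_pow_le hp hb ht hm' (by rwa [abs_sub_comm] : |m' - m| ≤ Δ)
  rwa [abs_sub_comm m' m] at h

theorem two_mul_sum_div_le {ι : Type*} [Fintype ι] {A Δ1 d : ι → ℝ} {Δp b ε : ℝ} {p : ℕ}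
    (hb : 0 < b) (hε : 0 < ε) (hd : ∑ k, d k ^ p ≤ Δp ^ p)
    (hscale : b ^ p ≥ 2 * ε⁻¹ * ((∑ k, binomialCrossTerms p (A k) (Δ1 k)) + Δp ^ p)) :
    2 * ∑ k, (binomialCrossTerms p (A k) (Δ1 k) + d k ^ p) / b ^ p ≤ ε := by
  rw [← Finset.sum_div, Finset.sum_add_distrib, ← mul_div_assoc, div_le_iff₀ (by positivity)]
  calc 2 * ((∑ k, binomialCrossTerms p (A k) (Δ1 k)) + ∑ k, d k ^ p)
      ≤ ε * (2 * ε⁻¹ * ((∑ k, binomialCrossTerms p (A k) (Δ1 k)) + Δp ^ p)) := by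
        field_simp
        linarith
    _ ≤ ε * b ^ p := by gcongr

noncomputable def truncGGDensity {ι : Type*} [Fintype ι] (c0 c1 : ι → ℝ) (b : ℝ) (p : ℕ)
    (m y : ι → ℝ) : ℝ :=
  ∏ k, truncGG (c0 k) (c1 k) (m k) b p (y k)

section TruncGGDensity

variable {ι : Type*} [Fintype ι] {c0 c1 Δ1 m m' : ι → ℝ} {b ε Δp : ℝ} {p : ℕ}

theorem truncGGDensity_nonneg (y : ι → ℝ) : 0 ≤ truncGGDensity c0 c1 b p m y :=
  Finset.prod_nonneg fun _ _ => truncGG_nonneg _ _ _ _ _ _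

theorem continuous_truncGGDensity : Continuous (truncGGDensity c0 c1 b p m) := by
  unfold truncGGDensity truncGG
  fun_prop

theorem truncGGDensity_le_exp_mul (hp : 1 ≤ p) (hb : 0 < b) (hε : 0 < ε)
    (hm : ∀ k, m k ∈ Set.Icc (c0 k) (c1 k)) (hm' : ∀ k, m' k ∈ Set.Icc (c0 k) (c1 k))
    (hΔ1 : ∀ k, |m k - m' k| ≤ Δ1 k) (hΔp : ∑ k, |m k - m' k| ^ p ≤ Δp ^ p)
    (hscale : b ^ p ≥ 2 * ε⁻¹ *
      ((∑ k, binomialCrossTerms p |c1 k - c0 k| (Δ1 k)) + Δp ^ p))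
    {y : ι → ℝ} (hy : ∀ k, y k ∈ Set.Icc (c0 k) (c1 k)) :
    truncGGDensity c0 c1 b p m y ≤ exp ε * truncGGDensity c0 c1 b p m' y := by
  set E : ι → ℝ := fun k => (binomialCrossTerms p |c1 k - c0 k| (Δ1 k) + |m k - m' k| ^ p) / b ^ p
  calc truncGGDensity c0 c1 b p m y
      ≤ ∏ k, (exp (E k) ^ 2 * truncGG (c0 k) (c1 k) (m' k) b p (y k)) :=
        Finset.prod_le_prod (fun _ _ => truncGG_nonneg _ _ _ _ _ _)
          fun k _ => truncGG_le hp hb (hm k) (hm' k) (hΔ1 k) (hy k)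
    _ = exp (2 * ∑ k, E k) * truncGGDensity c0 c1 b p m' y := by
        rw [Finset.prod_mul_distrib, Finset.prod_pow, ← exp_sum, ← exp_nat_mul]
        norm_num [truncGGDensity]
    _ ≤ exp ε * truncGGDensity c0 c1 b p m' y :=
        mul_le_mul_of_nonneg_right (exp_le_exp.2 (two_mul_sum_div_le hb hε hΔp hscale))
          (truncGGDensity_nonneg y)

theorem setIntegral_truncGGDensity_le_exp_mul (hp : 1 ≤ p) (hb : 0 < b) (hε : 0 < ε)
    (hm : ∀ k, m k ∈ Set.Icc (c0 k) (c1 k)) (hm' : ∀ k, m' k ∈ Set.Icc (c0 k) (c1 k))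
    (hΔ1 : ∀ k, |m k - m' k| ≤ Δ1 k) (hΔp : ∑ k, |m k - m' k| ^ p ≤ Δp ^ p)
    (hscale : b ^ p ≥ 2 * ε⁻¹ *
      ((∑ k, binomialCrossTerms p |c1 k - c0 k| (Δ1 k)) + Δp ^ p))
    {Q : Set (ι → ℝ)} (hQ : MeasurableSet Q)
    (hQbox : Q ⊆ Set.univ.pi fun k => Set.Icc (c0 k) (c1 k)) :
    ∫ y in Q, truncGGDensity c0 c1 b p m y ≤ exp ε * ∫ y in Q, truncGGDensity c0 c1 b p m' y := by
  have hint : ∀ n : ι → ℝ, IntegrableOn (truncGGDensity c0 c1 b p n) Q := fun n =>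
    (continuous_truncGGDensity.continuousOn.integrableOn_compact
      (isCompact_univ_pi fun k => isCompact_Icc)).mono_set hQbox
  rw [← integral_const_mul]
  exact setIntegral_mono_on (hint m) ((hint m').const_mul _) hQ fun y hy =>
    truncGGDensity_le_exp_mul hp hb hε hm hm' hΔ1 hΔp hscale fun k => hQbox hy k (Set.mem_univ k)

end TruncGGDensity

theorem abs_log_div_le_of_le_exp_mul {I J ε : ℝ} (hε : 0 ≤ ε) (hI : 0 ≤ I)
    (hIJ : I ≤ exp ε * J) (hJI : J ≤ exp ε * I) : |log (I / J)| ≤ ε := by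
  rcases hI.eq_or_lt with rfl | hI
  · simpa using hε
  have hJ : 0 < J := pos_of_mul_pos_right (hI.trans_le hIJ) (exp_pos ε).le
  rw [abs_le, le_log_iff_exp_le (div_pos hI hJ), log_le_iff_le_exp (div_pos hI hJ),
    le_div_iff₀ hJ, div_le_iff₀ hJ, exp_neg, inv_mul_le_iff₀ (exp_pos ε)]
  constructor <;> linarith

/-- the truncated generalized Gaussian mechanism, with scale
`b^p ≥ 2ε⁻¹(∑_k ∑_{j=1}^{p-1} (p choose j)|c1_k - c0_k|^{p-j} Δ1_k^j + Δp^p)`,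
satisfies ε-differential privacy: for all neighboring datasets and all measurable
`Q` inside the bounded output box, the log-ratio of output probabilities is ≤ ε.
Each coordinate is sampled independently from the GG(s_k, b, p) density truncated
(renormalized) on `[c0 k, c1 k]`. -/
theorem stmt7 {r : ℕ} {X : Type} (N : X → X → Prop) (s : X → Fin r → ℝ)
    (c0 c1 : Fin r → ℝ) (p : ℕ) (hp : 1 ≤ p) (b ε : ℝ) (hb : 0 < b) (hε : 0 < ε)
    (Δ1 : Fin r → ℝ) (Δp : ℝ)
    (hbound : ∀ x k, s x k ∈ Set.Icc (c0 k) (c1 k))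
    (hΔ1 : ∀ x x', N x x' → ∀ k, |s x k - s x' k| ≤ Δ1 k)
    (hΔp : ∀ x x', N x x' → ∑ k : Fin r, |s x k - s x' k| ^ p ≤ Δp ^ p)
    (hscale : b ^ p ≥ 2 * ε⁻¹ *
      ((∑ k : Fin r, ∑ j ∈ Finset.Icc 1 (p - 1),
          (p.choose j : ℝ) * |c1 k - c0 k| ^ (p - j) * Δ1 k ^ j) + Δp ^ p)) :
    ∀ x x', N x x' → ∀ Q : Set (Fin r → ℝ), MeasurableSet Q →
      Q ⊆ Set.univ.pi (fun k => Set.Icc (c0 k) (c1 k)) →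
      |Real.log
        ((∫ y in Q, ∏ k : Fin r,
            (Real.exp (-(|y k - s x k| / b) ^ p) /
              ∫ t in Set.Icc (c0 k) (c1 k), Real.exp (-(|t - s x k| / b) ^ p))) /
         (∫ y in Q, ∏ k : Fin r,
            (Real.exp (-(|y k - s x' k| / b) ^ p) /
              ∫ t in Set.Icc (c0 k) (c1 k), Real.exp (-(|t - s x' k| / b) ^ p))))| ≤ ε := by
  intro x x' hN Q hQ hQbox
  have hΔ1' : ∀ k, |s x' k - s x k| ≤ Δ1 k := fun k => abs_sub_comm (s x k) _ ▸ hΔ1 x x' hN k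
  have hΔp' : ∑ k, |s x' k - s x k| ^ p ≤ Δp ^ p := by
    simpa only [abs_sub_comm (s x' _)] using hΔp x x' hN
  exact abs_log_div_le_of_le_exp_mul hε.le
    (setIntegral_nonneg hQ fun y _ => truncGGDensity_nonneg y)
    (setIntegral_truncGGDensity_le_exp_mul hp hb hε (hbound x) (hbound x') (hΔ1 x x' hN)
      (hΔp x x' hN) hscale hQ hQbox)
    (setIntegral_truncGGDensity_le_exp_mul hp hb hε (hbound x') (hbound x) hΔ1' hΔp' hscale hQ
      hQbox)
end

section
/- Exponential mechanism privacy: let u(·|x) be a utility function with sensitivity Δ_u = max over neighboring (x,x') and outputs s* of |u(s*|x) − u(s*|x')|, and let the mechanism release s* with density f(s*|x) = exp(u(s*|x)·ε/(2Δ_u))/A(x) where A(x) is the normalizing constant. Then for all neighboring (x,x') and all outputs s*, |log(f(s*|x)/f(s*|x'))| ≤ ε. -/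
/-!
The log density ratio splits into the difference of the two exponents, at most `ε/2` by the
sensitivity bound, and the log ratio of the normalizers, also at most `ε/2` because their
integrands differ pointwise by a factor between `e^{-ε/2}` and `e^{ε/2}`.
-/

open MeasureTheory Real

section SetIntegralExp

variable {Ω : Type*} [MeasurableSpace Ω] {μ : Measure Ω} {S : Set Ω}

/-- Unlike `setIntegral_mono_on`, `S` need not be measurable. -/
lemma setIntegral_mono_of_forall_mem {f g : Ω → ℝ} (hf : IntegrableOn f S μ)
    (hg : IntegrableOn g S μ) (hfg : ∀ w ∈ S, f w ≤ g w) :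
    ∫ w in S, f w ∂μ ≤ ∫ w in S, g w ∂μ := by
  refine setIntegral_mono_ae_restrict hf hg ?_
  exact (ae_restrict_iff₀ (nullMeasurableSet_le hf.aemeasurable hg.aemeasurable)).mpr
    (Filter.Eventually.of_forall hfg)

lemma setIntegral_exp_le_exp_mul_setIntegral_exp {f g : Ω → ℝ} {c : ℝ}
    (hf : IntegrableOn (fun w => exp (f w)) S μ) (hg : IntegrableOn (fun w => exp (g w)) S μ)
    (hfg : ∀ w ∈ S, f w ≤ g w + c) :
    ∫ w in S, exp (f w) ∂μ ≤ exp c * ∫ w in S, exp (g w) ∂μ := by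
  rw [← integral_const_mul]
  refine setIntegral_mono_of_forall_mem hf (hg.const_mul _) fun w hw => ?_
  rw [← exp_add]
  exact exp_le_exp.mpr (by linarith [hfg w hw])

lemma abs_log_sub_log_le_of_le_exp_mul {a b c : ℝ} (ha : 0 < a) (hb : 0 < b)
    (hab : a ≤ exp c * b) (hba : b ≤ exp c * a) : |log a - log b| ≤ c := by
  have hab' := log_le_log ha hab
  have hba' := log_le_log hb hba
  rw [log_mul (exp_pos c).ne' hb.ne', log_exp] at hab'
  rw [log_mul (exp_pos c).ne' ha.ne', log_exp] at hba'
  exact abs_sub_le_iff.mpr ⟨by linarith, by linarith⟩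

lemma abs_log_setIntegral_exp_sub_le {f g : Ω → ℝ} {c : ℝ}
    (hf : 0 < ∫ w in S, exp (f w) ∂μ) (hg : 0 < ∫ w in S, exp (g w) ∂μ)
    (hfg : ∀ w ∈ S, |f w - g w| ≤ c) :
    |log (∫ w in S, exp (f w) ∂μ) - log (∫ w in S, exp (g w) ∂μ)| ≤ c := by
  have hf_int := Integrable.of_integral_ne_zero hf.ne'
  have hg_int := Integrable.of_integral_ne_zero hg.ne'
  refine abs_log_sub_log_le_of_le_exp_mul hf hg ?_ ?_
  · exact setIntegral_exp_le_exp_mul_setIntegral_exp hf_int hg_int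
      fun w hw => by linarith [(abs_sub_le_iff.mp (hfg w hw)).1]
  · exact setIntegral_exp_le_exp_mul_setIntegral_exp hg_int hf_int
      fun w hw => by linarith [(abs_sub_le_iff.mp (hfg w hw)).2]

end SetIntegralExp

lemma log_exp_div_div_exp_div (a b : ℝ) {A B : ℝ} (hA : 0 < A) (hB : 0 < B) :
    log ((exp a / A) / (exp b / B)) = (a - b) - (log A - log B) := by
  rw [log_div (by positivity) (by positivity), log_div (exp_pos a).ne' hA.ne',
    log_div (exp_pos b).ne' hB.ne', log_exp, log_exp]
  ring

lemma abs_mul_div_sub_mul_div_le {a b Δ ε : ℝ} (hε : 0 ≤ ε) (hΔ : 0 < Δ) (hab : |a - b| ≤ Δ) :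
    |a * ε / (2 * Δ) - b * ε / (2 * Δ)| ≤ ε / 2 := by
  have h2Δ : 0 < 2 * Δ := by positivity
  rw [← sub_div, ← sub_mul, abs_div, abs_mul, abs_of_nonneg hε, abs_of_pos h2Δ,
    div_le_iff₀ h2Δ]
  linarith [mul_le_mul_of_nonneg_right hab hε]

/-- the exponential mechanism with utility sensitivity `Δu` and density
`f(w|x) = exp(u(w|x)·ε/(2Δu)) / A(x)` satisfies the pointwise ε-DP log-density-ratio
bound for all neighboring datasets and all outputs in `S`. -/
theorem stmt8 {Ω X : Type} [MeasurableSpace Ω] (μ : Measure Ω) (S : Set Ω)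
    (N : X → X → Prop) (u : Ω → X → ℝ) (ε Δu : ℝ) (hε : 0 < ε) (hΔu : 0 < Δu)
    (hsens : ∀ x x', N x x' → ∀ w ∈ S, |u w x - u w x'| ≤ Δu)
    (A : X → ℝ)
    (hA : ∀ x, A x = ∫ w in S, Real.exp (u w x * ε / (2 * Δu)) ∂μ)
    (hApos : ∀ x, 0 < A x) :
    ∀ x x', N x x' → ∀ w ∈ S,
      |Real.log ((Real.exp (u w x * ε / (2 * Δu)) / A x) /
        (Real.exp (u w x' * ε / (2 * Δu)) / A x'))| ≤ ε := by
  intro x x' hN w hw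
  have hexponent : ∀ v ∈ S, |u v x * ε / (2 * Δu) - u v x' * ε / (2 * Δu)| ≤ ε / 2 :=
    fun v hv => abs_mul_div_sub_mul_div_le hε.le hΔu (hsens x x' hN v hv)
  have hnormalizer : |log (A x) - log (A x')| ≤ ε / 2 := by
    rw [hA x, hA x']
    exact abs_log_setIntegral_exp_sub_le (hA x ▸ hApos x) (hA x' ▸ hApos x') hexponent
  rw [log_exp_div_div_exp_div _ _ (hApos x) (hApos x')]
  calc _ ≤ |u w x * ε / (2 * Δu) - u w x' * ε / (2 * Δu)| + |log (A x) - log (A x')| :=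
        abs_sub _ _
    _ ≤ ε / 2 + ε / 2 := add_le_add (hexponent w hw) hnormalizer
    _ = ε := add_halves ε
end

section
/- When the utility function is u(s*|s) = −‖s* − s‖_p^p for integer p ≥ 1 and each s_k, s*_k ∈ [c_{k0}, c_{k1}], the sensitivity satisfies Δ_u ≤ ∑_{k=1}^r ∑_{j=1}^p (p choose j) (max{|c_{k0}|, |c_{k1}|})^{p−j} Δ_{1,k}^{(j)}, where Δ_{1,k}^{(j)} = max over neighboring pairs of |s_k(x)^j − s_k(x')^j|. -/
/-! Coordinatewise, the binomial theorem gives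
`(a - t)^p - (b - t)^p = ∑_{j=1}^p C(p,j) (a^j - b^j) (-t)^(p-j)` (the `j = 0` terms cancel),
so the triangle inequality and `|t| ≤ max |c₀| |c₁|` for `t ∈ [c₀, c₁]` bound each coordinate;
summing over the coordinates gives the claim. -/

open Finset

section BinomialDifference

variable {R : Type*}

theorem add_pow_sub_add_pow [CommRing R] (a b t : R) (p : ℕ) :
    (a + t) ^ p - (b + t) ^ p =
      ∑ j ∈ Icc 1 p, (a ^ j - b ^ j) * t ^ (p - j) * (p.choose j : R) := by
  rw [add_pow, add_pow, ← sum_sub_distrib, range_eq_Ico,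
    sum_eq_sum_Ico_succ_bot p.succ_pos, zero_add, Nat.succ_eq_add_one,
    Ico_add_one_right_eq_Icc]
  simp only [pow_zero, sub_self, zero_add, sub_mul]

theorem abs_add_pow_sub_add_pow_le [CommRing R] [LinearOrder R] [IsStrictOrderedRing R]
    (a b t : R) (p : ℕ) :
    |(a + t) ^ p - (b + t) ^ p| ≤
      ∑ j ∈ Icc 1 p, (p.choose j : R) * |t| ^ (p - j) * |a ^ j - b ^ j| := by
  rw [add_pow_sub_add_pow]
  refine (abs_sum_le_sum_abs _ _).trans (sum_le_sum fun j _ => le_of_eq ?_)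
  rw [abs_mul, abs_mul, abs_pow, Nat.abs_cast]
  ring

theorem abs_abs_sub_pow_sub_abs_sub_pow_le_s12 [CommRing R] [LinearOrder R] [IsStrictOrderedRing R]
    {p : ℕ} {a b t M : R} {Δ : ℕ → R}
    (ht : |t| ≤ M) (hΔ : ∀ j, |a ^ j - b ^ j| ≤ Δ j) :
    |(|a - t| ^ p - |b - t| ^ p)| ≤
      ∑ j ∈ Icc 1 p, (p.choose j : R) * M ^ (p - j) * Δ j := by
  calc |(|a - t| ^ p - |b - t| ^ p)|
      ≤ |(a + -t) ^ p - (b + -t) ^ p| := by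
        simpa only [abs_pow, ← sub_eq_add_neg] using
          abs_abs_sub_abs_le_abs_sub ((a - t) ^ p) ((b - t) ^ p)
    _ ≤ ∑ j ∈ Icc 1 p, (p.choose j : R) * |-t| ^ (p - j) * |a ^ j - b ^ j| :=
        abs_add_pow_sub_add_pow_le _ _ _ _
    _ ≤ ∑ j ∈ Icc 1 p, (p.choose j : R) * M ^ (p - j) * Δ j := by
        have hM : 0 ≤ M := (abs_nonneg t).trans ht
        gcongr with j
        · rwa [abs_neg]
        · exact hΔ j

end BinomialDifference

theorem stmt12_general {r : ℕ} (p : ℕ) (sstar s s' c0 c1 : Fin r → ℝ)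
    (Δ1j : Fin r → ℕ → ℝ)
    (hstar : ∀ k, sstar k ∈ Set.Icc (c0 k) (c1 k))
    (hΔ1j : ∀ k j, |s k ^ j - s' k ^ j| ≤ Δ1j k j) :
    |(∑ k : Fin r, |s k - sstar k| ^ p) - ∑ k : Fin r, |s' k - sstar k| ^ p| ≤
      ∑ k : Fin r, ∑ j ∈ Finset.Icc 1 p,
        (p.choose j : ℝ) * (max |c0 k| |c1 k|) ^ (p - j) * Δ1j k j := by
  rw [← sum_sub_distrib]
  refine (abs_sum_le_sum_abs _ _).trans (sum_le_sum fun k _ => ?_)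
  exact abs_abs_sub_pow_sub_abs_sub_pow_le_s12
    (abs_le_max_abs_abs (hstar k).1 (hstar k).2) (hΔ1j k)

/-- Lemma 2c: for `u(s*|s) = -‖s* - s‖_p^p` with bounded components,
`Δ_u ≤ ∑_k ∑_{j=1}^p (p choose j) (max{|c0_k|,|c1_k|})^{p-j} Δ_{1,k}^{(j)}`,
where `Δ_{1,k}^{(j)}` bounds `|s_k^j - (s'_k)^j|`. -/
theorem stmt12 {r : ℕ} (p : ℕ) (hp : 1 ≤ p) (sstar s s' c0 c1 : Fin r → ℝ)
    (Δ1j : Fin r → ℕ → ℝ)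
    (hs : ∀ k, s k ∈ Set.Icc (c0 k) (c1 k))
    (hs' : ∀ k, s' k ∈ Set.Icc (c0 k) (c1 k))
    (hstar : ∀ k, sstar k ∈ Set.Icc (c0 k) (c1 k))
    (hΔ1j : ∀ k j, |s k ^ j - s' k ^ j| ≤ Δ1j k j) :
    |(∑ k : Fin r, |s k - sstar k| ^ p) - ∑ k : Fin r, |s' k - sstar k| ^ p| ≤
      ∑ k : Fin r, ∑ j ∈ Finset.Icc 1 p,
        (p.choose j : ℝ) * (max |c0 k| |c1 k|) ^ (p - j) * Δ1j k j :=
  stmt12_general p sstar s s' c0 c1 Δ1j hstar hΔ1j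
end

section
/- Comparing the Gaussian mechanism of (ε,δ)-pDP with the Laplace mechanism of ε-DP for a scalar query: if δ < 2Φ(−√2) ≈ 0.157, then the Gaussian variance σ² = [(2ε)^{−1}Δ(√((Φ^{−1}(δ/2))² + 2ε) − Φ^{−1}(δ/2))]² exceeds the Laplace variance 2(Δ/ε)². Equivalently, (√((Φ^{−1}(δ/2))² + 2ε) − Φ^{−1}(δ/2))²/8 > 1 whenever (Φ^{−1}(δ/2))² > 2. -/
/-!
Monotonicity of `Φ` turns `Φ(q) = δ/2 < Φ(-√2)` into `q < -√2`. Then `√(q² + 2ε) > -q` gives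
`(√(q² + 2ε) - q)² > 4q² > 8`, and after cancelling `(Δ/ε)²` this is the variance comparison.
-/

open ProbabilityTheory

lemma four_mul_sq_lt_sq_sqrt_sq_add_sub {q c : ℝ} (hq : q ≤ 0) (hc : 0 < c) :
    4 * q ^ 2 < (Real.sqrt (q ^ 2 + c) - q) ^ 2 := by
  have hroot : -q < Real.sqrt (q ^ 2 + c) :=
    (Real.lt_sqrt (by linarith)).mpr (by nlinarith)
  calc 4 * q ^ 2 = (-2 * q) ^ 2 := by ring
    _ < (Real.sqrt (q ^ 2 + c) - q) ^ 2 := pow_lt_pow_left₀ (by linarith) (by linarith) two_ne_zero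

lemma two_mul_div_sq_lt_sq_iff {ε Δ s : ℝ} (hε : ε ≠ 0) (hΔ : Δ ≠ 0) :
    2 * (Δ / ε) ^ 2 < ((2 * ε)⁻¹ * Δ * s) ^ 2 ↔ 8 < s ^ 2 := by
  have hscale : ((2 * ε)⁻¹ * Δ * s) ^ 2 = (Δ / ε) ^ 2 * (s ^ 2 / 4) := by
    field_simp
    ring
  rw [hscale, mul_comm 2, mul_lt_mul_iff_right₀ (by positivity)]
  constructor <;> intro h <;> linarith

theorem stmt16_general (ε δ Δ q : ℝ) (hε : 0 < ε) (hΔ : 0 < Δ)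
    (hq : cdf (gaussianReal 0 1) q = δ / 2)
    (hδsmall : δ < 2 * cdf (gaussianReal 0 1) (-Real.sqrt 2)) :
    ((2 * ε)⁻¹ * Δ * (Real.sqrt (q ^ 2 + 2 * ε) - q)) ^ 2 > 2 * (Δ / ε) ^ 2 ∧
    (q ^ 2 > 2 → (Real.sqrt (q ^ 2 + 2 * ε) - q) ^ 2 / 8 > 1) := by
  have hq_lt : q < -Real.sqrt 2 :=
    (cdf (gaussianReal 0 1)).mono.reflect_lt (by rw [hq]; linarith)
  have hq_sq : 2 < q ^ 2 := by
    have := Real.sq_sqrt (show (0 : ℝ) ≤ 2 by norm_num)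
    nlinarith [Real.sqrt_nonneg 2]
  have h8 : 8 < (Real.sqrt (q ^ 2 + 2 * ε) - q) ^ 2 := by
    have := four_mul_sq_lt_sq_sqrt_sq_add_sub (q := q) (c := 2 * ε)
      (by linarith [Real.sqrt_nonneg 2]) (by positivity)
    linarith
  exact ⟨(two_mul_div_sq_lt_sq_iff hε.ne' hΔ.ne').mpr h8, fun _ => by linarith⟩

/-- if `δ < 2Φ(−√2)`, the Gaussian-mechanism variance
`σ² = [(2ε)⁻¹Δ(√(q² + 2ε) − q)]²` (with `q = Φ⁻¹(δ/2)`) exceeds the Laplace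
variance `2(Δ/ε)²`; equivalently `(√(q² + 2ε) − q)²/8 > 1` whenever `q² > 2`. -/
theorem stmt16 (ε δ Δ q : ℝ) (hε : 0 < ε) (hδ0 : 0 < δ) (hδ1 : δ < 1) (hΔ : 0 < Δ)
    (hq : cdf (gaussianReal 0 1) q = δ / 2)
    (hδsmall : δ < 2 * cdf (gaussianReal 0 1) (-Real.sqrt 2)) :
    ((2 * ε)⁻¹ * Δ * (Real.sqrt (q ^ 2 + 2 * ε) - q)) ^ 2 > 2 * (Δ / ε) ^ 2 ∧
    (q ^ 2 > 2 → (Real.sqrt (q ^ 2 + 2 * ε) - q) ^ 2 / 8 > 1) :=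
  stmt16_general ε δ Δ q hε hΔ hq hδsmall
end
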